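/- arXiv:1208.3672 — 2 statements merged into one kernel-verified Lean document; each statement's English description precedes it below -/
import Mathlib

section
/- Let X be Hermitian positive definite and ΔX Hermitian such that X + ΔX ≥ (1/ν)I > 0 for some ν > 0. Then for n×n complex matrices A_1,...,A_m, ‖∑_{i=1}^m A_i*((X+ΔX)⁻¹ - X⁻¹)A_i‖ ≤ (‖ΔX‖ + ν‖ΔX‖²) ∑_{i=1}^m ‖X⁻¹A_i‖², where ‖·‖ is the spectral norm. -/
open scoped ComplexOrder
open Matrix Finset
open scoped Matrix.Norms.L2Operator
open Ring

/-!
By the resolvent identity applied twice, with `Δ = ΔX`,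
`(X + Δ)⁻¹ - X⁻¹ = -X⁻¹ Δ X⁻¹ + X⁻¹ Δ (X + Δ)⁻¹ Δ X⁻¹`.
Since `X⁻¹` is self-adjoint, conjugating by `A` turns every `X⁻¹` next to `A` into `B = X⁻¹ A`
or its adjoint, so submultiplicativity and `‖Bᴴ‖ = ‖B‖` bound each term by
`(‖Δ‖ + ‖(X + Δ)⁻¹‖ ‖Δ‖²) ‖B‖²`. Finally `X + Δ ≥ ν⁻¹` gives `‖(X + Δ)⁻¹‖ ≤ ν`, because inversion
is operator antitone on strictly positive elements of a C⋆-algebra.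
-/

theorem Ring.inverse_add_sub_inverse {R : Type*} [Ring R] {x d : R} (hx : IsUnit x)
    (hxd : IsUnit (x + d)) :
    (x + d)⁻¹ʳ - x⁻¹ʳ = -(x⁻¹ʳ * d * x⁻¹ʳ) + x⁻¹ʳ * d * (x + d)⁻¹ʳ * d * x⁻¹ʳ := by
  have hfirst : (x + d)⁻¹ʳ - x⁻¹ʳ = -((x + d)⁻¹ʳ * d * x⁻¹ʳ) := by
    rw [Ring.inverse_sub_inverse (iff_of_true hxd hx)]; noncomm_ring
  have hback : (x + d)⁻¹ʳ = x⁻¹ʳ - x⁻¹ʳ * d * (x + d)⁻¹ʳ := by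
    rw [eq_sub_iff_add_eq, ← eq_sub_iff_add_eq', Ring.inverse_sub_inverse (iff_of_true hx hxd),
      add_sub_cancel_left]
  rw [hfirst]
  conv_lhs => rw [hback]
  noncomm_ring

theorem norm_star_mul_inverse_add_sub_inverse_mul_le {A : Type*} [NormedRing A] [StarRing A]
    [NormedStarGroup A] {x d : A} (hx : IsUnit x) (hsa : IsSelfAdjoint x) (hxd : IsUnit (x + d))
    (a : A) :
    ‖star a * ((x + d)⁻¹ʳ - x⁻¹ʳ) * a‖ ≤ (‖d‖ + ‖(x + d)⁻¹ʳ‖ * ‖d‖ ^ 2) * ‖x⁻¹ʳ * a‖ ^ 2 := by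
  set b := x⁻¹ʳ * a
  have hstar : star b = star a * x⁻¹ʳ := by
    rw [star_mul, hsa.ringInverse.star_eq]
  have hexpand : star a * ((x + d)⁻¹ʳ - x⁻¹ʳ) * a =
      -(star b * d * b) + star b * d * (x + d)⁻¹ʳ * d * b := by
    rw [Ring.inverse_add_sub_inverse hx hxd, hstar]; noncomm_ring
  rw [hexpand]
  calc ‖-(star b * d * b) + star b * d * (x + d)⁻¹ʳ * d * b‖
      ≤ ‖star b‖ * ‖d‖ * ‖b‖ + ‖star b‖ * ‖d‖ * ‖(x + d)⁻¹ʳ‖ * ‖d‖ * ‖b‖ := by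
        refine (norm_add_le _ _).trans (add_le_add ?_ ?_)
        · rw [norm_neg]; exact norm_mul₃_le
        · refine (norm_mul_le _ _).trans ?_
          gcongr
          refine (norm_mul_le _ _).trans ?_
          gcongr
          exact norm_mul₃_le
    _ = (‖d‖ + ‖(x + d)⁻¹ʳ‖ * ‖d‖ ^ 2) * ‖b‖ ^ 2 := by rw [norm_star]; ring

theorem CStarAlgebra.norm_ringInverse_le_of_algebraMap_le {A : Type*} [CStarAlgebra A]
    [PartialOrder A] [StarOrderedRing A] {a : A} {c : ℝ} (hc : 0 < c)
    (h : algebraMap ℝ A c ≤ a) : ‖a⁻¹ʳ‖ ≤ c⁻¹ := by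
  have hcpos : IsStrictlyPositive (algebraMap ℝ A c) := isStrictlyPositive_algebraMap hc
  have hinv : (algebraMap ℝ A c)⁻¹ʳ = algebraMap ℝ A c⁻¹ := by
    simpa [← map_mul, hc.ne'] using
      (Ring.inverse_mul_eq_iff_eq_mul _ 1 (algebraMap ℝ A c⁻¹) hcpos.isUnit).2
  rw [CStarAlgebra.norm_le_iff_le_algebraMap _ (inv_nonneg.2 hc.le)
    (hcpos.of_le h).ringInverse.nonneg, ← hinv]
  exact CStarAlgebra.ringInverse_le_ringInverse h

open scoped MatrixOrder in
theorem stmt13_general {n m : ℕ} (X ΔX : Matrix (Fin n) (Fin n) ℂ)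
    (hX : X.PosDef)
    (ν : ℝ) (hν : 0 < ν)
    (h : (X + ΔX - ((ν⁻¹ : ℝ) : ℂ) • (1 : Matrix (Fin n) (Fin n) ℂ)).PosSemidef)
    (A : Fin m → Matrix (Fin n) (Fin n) ℂ) :
    ‖∑ i, (A i)ᴴ * ((X + ΔX)⁻¹ - X⁻¹) * A i‖ ≤
      (‖ΔX‖ + ν * ‖ΔX‖ ^ 2) * ∑ i, ‖X⁻¹ * A i‖ ^ 2 := by
  have hle : algebraMap ℝ _ ν⁻¹ ≤ X + ΔX := by
    rw [Matrix.le_iff, Algebra.algebraMap_eq_smul_one, ← Complex.coe_smul]; exact h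
  have hunit : IsUnit (X + ΔX) :=
    ((isStrictlyPositive_algebraMap (inv_pos.2 hν)).of_le hle).isUnit
  have hinv : ‖(X + ΔX)⁻¹ʳ‖ ≤ ν := by
    simpa using CStarAlgebra.norm_ringInverse_le_of_algebraMap_le (inv_pos.2 hν) hle
  simp only [Matrix.nonsing_inv_eq_ringInverse, mul_sum]
  refine (norm_sum_le _ _).trans (sum_le_sum fun i _ => ?_)
  calc _ ≤ _ := norm_star_mul_inverse_add_sub_inverse_mul_le hX.isUnit hX.isHermitian hunit (A i)
    _ ≤ _ := by gcongr

theorem stmt13 {n m : ℕ} (X ΔX : Matrix (Fin n) (Fin n) ℂ)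
    (hX : X.PosDef) (hΔX : ΔX.IsHermitian)
    (ν : ℝ) (hν : 0 < ν)
    (h : (X + ΔX - ((ν⁻¹ : ℝ) : ℂ) • (1 : Matrix (Fin n) (Fin n) ℂ)).PosSemidef)
    (A : Fin m → Matrix (Fin n) (Fin n) ℂ) :
    ‖∑ i, (A i)ᴴ * ((X + ΔX)⁻¹ - X⁻¹) * A i‖ ≤
      (‖ΔX‖ + ν * ‖ΔX‖ ^ 2) * ∑ i, ‖X⁻¹ * A i‖ ^ 2 :=
  stmt13_general X ΔX hX ν hν h A
end

section
/- Let X be Hermitian positive definite satisfying X - ∑_{i=1}^m B_i* X B_i = Q > 0 where B_i = X⁻¹ A_i. Then the linear operator L on Hermitian matrices defined by L(W) = W + ∑_{i=1}^m B_i* W B_i is invertible. -/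
/-!
Write `Φ(W) = ∑ Bᵢᴴ W Bᵢ`, so that `L = id + Φ`. Since `L` is linear and commutes with `ᴴ`,
on a finite-dimensional space it suffices to show that `L` kills no nonzero Hermitian matrix.
After the congruence `W ↦ R⁻¹ᴴ W R⁻¹` with `X = Rᴴ R` we may assume `X = 1`, so `Φ(1) = 1 - Q`.
If `W + Φ(W) = 0` and `c` is the largest modulus of an eigenvalue of `W`, then `-c ≤ W ≤ c`;
since `Φ` is positive and `Φ(W) = -W`, this gives `±W ≤ c (1 - Q)`. Evaluating at a unit
eigenvector `v` for an eigenvalue of modulus `c` yields `c ≤ c - c vᴴQv`, hence `c = 0`.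
-/

open scoped ComplexOrder MatrixOrder ComplexStarModule
open Matrix Finset

namespace Matrix

variable {𝕜 n ι : Type*} [RCLike 𝕜] [Fintype n] [Fintype ι]

theorem re_dotProduct_mulVec_mono {M N : Matrix n n 𝕜} (h : M ≤ N) (v : n → 𝕜) :
    RCLike.re (star v ⬝ᵥ (M *ᵥ v)) ≤ RCLike.re (star v ⬝ᵥ (N *ᵥ v)) := by
  have := RCLike.nonneg_iff.mp ((le_iff.mp h).dotProduct_mulVec_nonneg v) |>.1
  simpa [sub_mulVec, dotProduct_sub] using this

variable [DecidableEq n]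

theorem IsHermitian.neg_smul_one_le_and_le_smul_one {H : Matrix n n 𝕜} (hH : H.IsHermitian)
    {c : ℝ} (hc : ∀ i, |hH.eigenvalues i| ≤ c) : -(c • 1) ≤ H ∧ H ≤ c • 1 := by
  have hsa := hH.isSelfAdjoint
  rw [← neg_smul, ← Algebra.algebraMap_eq_smul_one, ← Algebra.algebraMap_eq_smul_one,
    algebraMap_le_iff_le_spectrum hsa, le_algebraMap_iff_spectrum_le hsa,
    hH.spectrum_real_eq_range_eigenvalues]
  simp only [Set.forall_mem_range]
  exact ⟨fun i => neg_le_of_abs_le (hc i), fun i => le_of_abs_le (hc i)⟩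

def conjSum (B : ι → Matrix n n 𝕜) : Matrix n n 𝕜 →ₗ[𝕜] Matrix n n 𝕜 :=
  ∑ i, LinearMap.mulLeft 𝕜 (B i)ᴴ ∘ₗ LinearMap.mulRight 𝕜 (B i)

variable (B : ι → Matrix n n 𝕜)

theorem conjSum_apply (M : Matrix n n 𝕜) : conjSum B M = ∑ i, (B i)ᴴ * M * B i := by
  simp [conjSum, Matrix.mul_assoc]

theorem conjSum_conjTranspose (M : Matrix n n 𝕜) : conjSum B Mᴴ = (conjSum B M)ᴴ := by
  simp [conjSum_apply, conjTranspose_sum, Matrix.mul_assoc]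

theorem PosSemidef.conjSum {M : Matrix n n 𝕜} (hM : M.PosSemidef) :
    (conjSum B M).PosSemidef := by
  rw [conjSum_apply]
  exact posSemidef_sum _ fun i _ => hM.conjTranspose_mul_mul_same (B i)

theorem conjSum_mono {M N : Matrix n n 𝕜} (h : M ≤ N) : conjSum B M ≤ conjSum B N := by
  rw [le_iff, ← map_sub]
  exact (le_iff.mp h).conjSum B

theorem conjSum_mul_mul_inv {R : Matrix n n 𝕜} (hR : IsUnit R) (M : Matrix n n 𝕜) :
    conjSum (fun i => R * B i * R⁻¹) (R⁻¹ᴴ * M * R⁻¹) = R⁻¹ᴴ * conjSum B M * R⁻¹ := by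
  have hRR : R⁻¹ * R = 1 := nonsing_inv_mul R ((isUnit_iff_isUnit_det R).mp hR)
  simp only [conjSum_apply, Finset.mul_sum, Finset.sum_mul]
  refine sum_congr rfl fun i _ => ?_
  calc _ = R⁻¹ᴴ * (B i)ᴴ * (R⁻¹ * R)ᴴ * M * (R⁻¹ * R) * B i * R⁻¹ := by
        simp only [conjTranspose_mul, Matrix.mul_assoc]
    _ = _ := by simp [hRR, Matrix.mul_assoc]

theorem IsHermitian.eq_zero_of_add_conjSum_eq_zero_of_conjSum_one {Q H : Matrix n n 𝕜}
    (hQ : Q.PosDef) (hB : conjSum B 1 = 1 - Q) (hH : H.IsHermitian) (h : H + conjSum B H = 0) :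
    H = 0 := by
  rw [← hH.eigenvalues_eq_zero_iff]
  ext k
  obtain ⟨j, -, hj⟩ := exists_max_image univ (fun i => |hH.eigenvalues i|) ⟨k, mem_univ k⟩
  set c := |hH.eigenvalues j|
  obtain ⟨hlo, hhi⟩ := hH.neg_smul_one_le_and_le_smul_one fun i => hj i (mem_univ i)
  have hΦH : conjSum B H = -H := eq_neg_of_add_eq_zero_right h
  have hup : H ≤ c • (1 - Q) := by
    simpa [hΦH, hB] using conjSum_mono B hlo
  have hdown : -H ≤ c • (1 - Q) := by
    simpa [hΦH, hB] using conjSum_mono B hhi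
  set v := ⇑(hH.eigenvectorBasis j)
  have hv : v ≠ 0 := (WithLp.ofLp_eq_zero 2).ne.2 (hH.eigenvectorBasis.orthonormal.ne_zero j)
  have hvH : RCLike.re (star v ⬝ᵥ (H *ᵥ v)) = hH.eigenvalues j := (hH.eigenvalues_eq j).symm
  have hvv : RCLike.re (star v ⬝ᵥ v) = 1 := by
    rw [dotProduct_comm, ← EuclideanSpace.inner_eq_star_dotProduct, inner_self_eq_norm_sq_to_K,
      hH.eigenvectorBasis.orthonormal.1 j]
    simp
  have hvc : RCLike.re (star v ⬝ᵥ ((c • (1 - Q)) *ᵥ v)) =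
      c * (1 - RCLike.re (star v ⬝ᵥ (Q *ᵥ v))) := by
    simp [smul_mulVec, sub_mulVec, dotProduct_sub, RCLike.smul_re, hvv]
  have h1 := re_dotProduct_mulVec_mono hup v
  have h2 := re_dotProduct_mulVec_mono hdown v
  rw [neg_mulVec, dotProduct_neg, map_neg] at h2
  rw [hvH, hvc] at h1 h2
  have hq := hQ.re_dotProduct_pos hv
  have hc : c ≤ 0 := by
    have : c ≤ c * (1 - RCLike.re (star v ⬝ᵥ (Q *ᵥ v))) :=
      abs_le.mpr ⟨by linarith, by linarith⟩
    nlinarith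
  exact abs_nonpos_iff.mp ((hj k (mem_univ k)).trans hc)

theorem IsHermitian.eq_zero_of_add_conjSum_eq_zero {X Q W : Matrix n n 𝕜}
    (hX : X.PosDef) (hQ : Q.PosDef) (hB : conjSum B X = X - Q) (hW : W.IsHermitian)
    (h : W + conjSum B W = 0) : W = 0 := by
  obtain ⟨R, hR, rfl⟩ :=
    CStarAlgebra.isStrictlyPositive_iff_eq_star_mul_self.mp hX.isStrictlyPositive
  have hT : IsUnit R⁻¹ := isUnit_nonsing_inv_iff.mpr hR
  have hX1 : R⁻¹ᴴ * (star R * R) * R⁻¹ = 1 := by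
    have hRR : R * R⁻¹ = 1 := mul_nonsing_inv R ((isUnit_iff_isUnit_det R).mp hR)
    calc _ = (R * R⁻¹)ᴴ * (R * R⁻¹) := by
          simp only [conjTranspose_mul, star_eq_conjTranspose, Matrix.mul_assoc]
      _ = 1 := by simp [hRR]
  have key := IsHermitian.eq_zero_of_add_conjSum_eq_zero_of_conjSum_one
    (fun i => R * B i * R⁻¹) (hQ.conjTranspose_mul_mul_same (mulVec_injective_of_isUnit hT))
    (by rw [← hX1, conjSum_mul_mul_inv B hR, hB, Matrix.mul_sub, Matrix.sub_mul])
    (isHermitian_conjTranspose_mul_mul R⁻¹ hW)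
    (by rw [conjSum_mul_mul_inv B hR, ← Matrix.add_mul, ← Matrix.mul_add, h, Matrix.mul_zero,
      Matrix.zero_mul])
  rwa [hT.mul_left_eq_zero, (isUnit_conjTranspose _).mpr hT |>.mul_right_eq_zero] at key

end Matrix

namespace LinearMap

variable {A : Type*} [AddCommGroup A] [Module ℂ A] [StarAddMonoid A]

theorem injective_of_star_comm [StarModule ℂ A] (f : A →ₗ[ℂ] A)
    (hf : ∀ a, f (star a) = star (f a)) (h : ∀ a, IsSelfAdjoint a → f a = 0 → a = 0) :
    Function.Injective f := by
  rw [← ker_eq_bot, ker_eq_bot']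
  intro a ha
  have hstar : f (star a) = 0 := by rw [hf, ha, star_zero]
  have hre : (ℜ a : A) = 0 := h _ (ℜ a).2 <| by
    rw [realPart_apply_coe, map_smul_of_tower, map_add, ha, hstar, add_zero, smul_zero]
  have him : (ℑ a : A) = 0 := h _ (ℑ a).2 <| by
    rw [imaginaryPart_apply_coe, map_smul, map_smul_of_tower, map_sub, ha, hstar, sub_zero,
      smul_zero, smul_zero]
  rw [← realPart_add_I_smul_imaginaryPart a, hre, him, smul_zero, add_zero]

theorem existsUnique_isSelfAdjoint_apply_eq [FiniteDimensional ℂ A] (f : A →ₗ[ℂ] A)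
    (hf : ∀ a, f (star a) = star (f a)) (hinj : Function.Injective f) {b : A}
    (hb : IsSelfAdjoint b) : ∃! a, IsSelfAdjoint a ∧ f a = b := by
  obtain ⟨a, rfl⟩ := injective_iff_surjective.mp hinj b
  exact ⟨a, ⟨hinj (by rw [hf, hb.star_eq]), rfl⟩, fun a' ha' => hinj ha'.2⟩

end LinearMap

theorem stmt16 {n m : ℕ} (Q : Matrix (Fin n) (Fin n) ℂ) (hQ : Q.PosDef)
    (A : Fin m → Matrix (Fin n) (Fin n) ℂ)
    (X : Matrix (Fin n) (Fin n) ℂ) (hX : X.PosDef)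
    (heq : X - ∑ i, (A i)ᴴ * X⁻¹ * A i = Q) :
    ∀ Y : Matrix (Fin n) (Fin n) ℂ, Y.IsHermitian →
      ∃! W : Matrix (Fin n) (Fin n) ℂ,
        W.IsHermitian ∧ W + ∑ i, (X⁻¹ * A i)ᴴ * W * (X⁻¹ * A i) = Y := by
  intro Y hY
  set B := fun i => X⁻¹ * A i
  have hXX : X * X⁻¹ = 1 := mul_nonsing_inv X ((isUnit_iff_isUnit_det X).mp hX.isUnit)
  have hB : conjSum B X = X - Q := by
    rw [← heq, sub_sub_cancel, conjSum_apply]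
    refine sum_congr rfl fun i _ => ?_
    calc _ = (A i)ᴴ * (X⁻¹ * (X * X⁻¹)) * A i := by
          simp only [B, conjTranspose_mul, hX.1.inv.eq, Matrix.mul_assoc]
      _ = _ := by rw [hXX, Matrix.mul_one]
  let L := LinearMap.id + conjSum B
  have hL : ∀ W, L (star W) = star (L W) := fun W => by
    simp [L, star_eq_conjTranspose, conjSum_conjTranspose]
  have hinj : Function.Injective L := L.injective_of_star_comm hL
    fun W hW h => IsHermitian.eq_zero_of_add_conjSum_eq_zero B hX hQ hB hW h
  have hLW : ∀ W, L W = W + ∑ i, (X⁻¹ * A i)ᴴ * W * (X⁻¹ * A i) := fun W => by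
    rw [LinearMap.add_apply, LinearMap.id_apply, conjSum_apply]
  simpa only [hLW, ← isHermitian_iff_isSelfAdjoint] using
    L.existsUnique_isSelfAdjoint_apply_eq hL hinj hY.isSelfAdjoint
end
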